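/- arXiv:2007.13612 — 2 statements merged into one kernel-verified Lean document; each statement's English description precedes it below -/
import Mathlib

section
/- For a standard normal random variable z and any real constants a, b, the expectation E[z · min(1, e^{az+b})] equals a · e^{a²/2 + b} · Φ(−b/|a| − |a|), where Φ is the standard normal cumulative distribution function. -/
/-!
Write `φ(z) = e^{-z²/2}`. On `{a z + b ≤ 0}` the integrand is
`z e^{az+b} φ(z) = e^{a²/2+b} z φ(z - a)`, elsewhere it is `z φ(z)`. Since `(-φ)' = z φ`, both
pieces integrate in closed form, and for `a > 0` the boundary terms at the split point
`c = -b/a` cancel because `e^{a²/2+b} φ(c - a) = φ(c)`, leaving `a e^{a²/2+b} Φ(c - a)`.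
The case `a < 0` follows by the symmetry `z ↦ -z` of the standard Gaussian, and `a = 0`
from `E z = 0`.
-/

open MeasureTheory Real ProbabilityTheory

/-- The standard normal cumulative distribution function. -/
noncomputable def stdNormalCDF (x : ℝ) : ℝ :=
  (Real.sqrt (2 * Real.pi))⁻¹ * ∫ t in Set.Iic x, Real.exp (-t ^ 2 / 2)

open Set Filter Topology

lemma setIntegral_Iic_comp_sub_right {E : Type*} [NormedAddCommGroup E] [NormedSpace ℝ E]
    (f : ℝ → E) (c d : ℝ) : ∫ x in Iic c, f (x - d) = ∫ x in Iic (c - d), f x := by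
  have h := (measurePreserving_sub_right volume d).setIntegral_preimage_emb
    (measurableEmbedding_subRight d) f (Iic (c - d))
  rwa [preimage_sub_const_Iic, sub_add_cancel] at h

lemma integral_comp_neg_gaussianReal_zero {E : Type*} [NormedAddCommGroup E] [NormedSpace ℝ E]
    (v : NNReal) (f : ℝ → E) : ∫ x, f (-x) ∂gaussianReal 0 v = ∫ x, f x ∂gaussianReal 0 v := by
  have h := integral_map_equiv (MeasurableEquiv.neg ℝ) f (μ := gaussianReal 0 v)
  rwa [MeasurableEquiv.neg_apply, gaussianReal_map_neg, neg_zero, eq_comm] at h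

lemma integral_gaussianReal_zero_one_eq (f : ℝ → ℝ) :
    ∫ x, f x ∂gaussianReal 0 1 = (√(2 * π))⁻¹ * ∫ x, f x * exp (-x ^ 2 / 2) := by
  rw [integral_gaussianReal_eq_integral_smul one_ne_zero, ← integral_const_mul]
  congr with x
  simp only [gaussianPDFReal_def, NNReal.coe_one, mul_one, sub_zero, smul_eq_mul]
  ring

lemma integrable_exp_neg_sq_div_two : Integrable fun x : ℝ ↦ exp (-x ^ 2 / 2) := by
  simpa [neg_div, div_eq_inv_mul] using integrable_exp_neg_mul_sq (b := 1 / 2) (by norm_num)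

lemma integrable_mul_exp_neg_sq_div_two : Integrable fun x : ℝ ↦ x * exp (-x ^ 2 / 2) := by
  simpa [neg_div, div_eq_inv_mul] using integrable_mul_exp_neg_mul_sq (b := 1 / 2) (by norm_num)

lemma integral_Ioi_mul_exp_neg_sq_div_two (c : ℝ) :
    ∫ x in Ioi c, x * exp (-x ^ 2 / 2) = exp (-c ^ 2 / 2) := by
  have hderiv (x : ℝ) :
      HasDerivAt (fun x : ℝ ↦ -exp (-x ^ 2 / 2)) (x * exp (-x ^ 2 / 2)) x := by
    have h : HasDerivAt (fun x : ℝ ↦ -x ^ 2 / 2) (-x) x := by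
      simpa [neg_div] using ((hasDerivAt_pow 2 x).div_const 2).fun_neg
    simpa [mul_comm] using h.exp.fun_neg
  have hlim : Tendsto (fun x : ℝ ↦ -exp (-x ^ 2 / 2)) atTop (𝓝 0) := by
    rw [← neg_zero]
    refine (tendsto_exp_comp_nhds_zero.2 ?_).neg
    simp only [neg_div]
    exact tendsto_neg_atTop_atBot.comp
      ((tendsto_pow_atTop two_ne_zero).atTop_div_const two_pos)
  simpa using integral_Ioi_of_hasDerivAt_of_tendsto' (fun x _ ↦ hderiv x)
    integrable_mul_exp_neg_sq_div_two.integrableOn hlim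

lemma integral_Iic_mul_exp_neg_sq_div_two (c : ℝ) :
    ∫ x in Iic c, x * exp (-x ^ 2 / 2) = -exp (-c ^ 2 / 2) := by
  have h := integral_comp_neg_Iic c fun x ↦ x * exp (-x ^ 2 / 2)
  simp only [neg_mul, even_two, Even.neg_pow, integral_neg,
    integral_Ioi_mul_exp_neg_sq_div_two] at h
  linear_combination -h

lemma integral_Iic_mul_exp_mul_add_mul_exp_neg_sq_div_two (a b c : ℝ) :
    ∫ x in Iic c, x * exp (a * x + b) * exp (-x ^ 2 / 2)
      = exp (a ^ 2 / 2 + b)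
        * (-exp (-(c - a) ^ 2 / 2) + a * ∫ x in Iic (c - a), exp (-x ^ 2 / 2)) := by
  have hshift (x : ℝ) : x * exp (a * x + b) * exp (-x ^ 2 / 2)
      = exp (a ^ 2 / 2 + b)
        * ((x - a) * exp (-(x - a) ^ 2 / 2) + a * exp (-(x - a) ^ 2 / 2)) := by
    rw [← add_mul, sub_add_cancel, mul_left_comm, ← exp_add, mul_assoc, ← exp_add]
    ring_nf
  simp_rw [hshift]
  rw [integral_const_mul,
    setIntegral_Iic_comp_sub_right (fun y ↦ y * exp (-y ^ 2 / 2) + a * exp (-y ^ 2 / 2)),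
    integral_add integrable_mul_exp_neg_sq_div_two.integrableOn
      (integrable_exp_neg_sq_div_two.const_mul a).integrableOn,
    integral_const_mul, integral_Iic_mul_exp_neg_sq_div_two]

lemma integrable_mul_min_one_exp_mul_exp_neg_sq_div_two (a b : ℝ) :
    Integrable fun z : ℝ ↦ z * min 1 (exp (a * z + b)) * exp (-z ^ 2 / 2) := by
  refine integrable_mul_exp_neg_sq_div_two.mono (by fun_prop) (ae_of_all _ fun z ↦ ?_)
  have hmin : |min 1 (exp (a * z + b))| ≤ 1 :=
    abs_le.2 ⟨by linarith [le_min zero_le_one (exp_pos (a * z + b)).le], min_le_left _ _⟩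
  simp only [norm_mul, Real.norm_eq_abs]
  gcongr
  exact mul_le_of_le_one_right (abs_nonneg z) hmin

lemma integral_mul_min_one_exp_gaussianReal_of_pos (b : ℝ) {a : ℝ} (ha : 0 < a) :
    ∫ z, z * min 1 (exp (a * z + b)) ∂gaussianReal 0 1
      = a * exp (a ^ 2 / 2 + b) * stdNormalCDF (-b / a - a) := by
  set c := -b / a
  have hc : a * c + b = 0 := by rw [mul_div_cancel₀ _ ha.ne', neg_add_cancel]
  have hint := integrable_mul_min_one_exp_mul_exp_neg_sq_div_two a b
  have below : ∫ z in Iic c, z * min 1 (exp (a * z + b)) * exp (-z ^ 2 / 2)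
      = ∫ z in Iic c, z * exp (a * z + b) * exp (-z ^ 2 / 2) := by
    refine setIntegral_congr_fun measurableSet_Iic fun z hz ↦ ?_
    have : a * z + b ≤ 0 := by nlinarith [mul_le_mul_of_nonneg_left (mem_Iic.1 hz) ha.le]
    rw [min_eq_right (exp_le_one_iff.2 this)]
  have above : ∫ z in Ioi c, z * min 1 (exp (a * z + b)) * exp (-z ^ 2 / 2)
      = ∫ z in Ioi c, z * exp (-z ^ 2 / 2) := by
    refine setIntegral_congr_fun measurableSet_Ioi fun z hz ↦ ?_
    have : 0 ≤ a * z + b := by nlinarith [mul_le_mul_of_nonneg_left (mem_Ioi.1 hz).le ha.le]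
    rw [min_eq_left (one_le_exp this), mul_one]
  have hcancel : exp (a ^ 2 / 2 + b) * exp (-(c - a) ^ 2 / 2) = exp (-c ^ 2 / 2) := by
    rw [← exp_add]; congr 1; linear_combination hc
  rw [integral_gaussianReal_zero_one_eq, ← intervalIntegral.integral_Iic_add_Ioi
    hint.integrableOn hint.integrableOn, below, above,
    integral_Iic_mul_exp_mul_add_mul_exp_neg_sq_div_two, integral_Ioi_mul_exp_neg_sq_div_two,
    stdNormalCDF]
  linear_combination -(√(2 * π))⁻¹ * hcancel

theorem expectation_min_exp_gaussian_general (a b : ℝ) :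
    ∫ z, z * min 1 (Real.exp (a * z + b)) ∂(gaussianReal 0 1)
      = a * Real.exp (a ^ 2 / 2 + b) * stdNormalCDF (-b / |a| - |a|) := by
  rcases lt_trichotomy a 0 with ha | rfl | ha
  · rw [← integral_comp_neg_gaussianReal_zero, abs_of_neg ha]
    have key := integral_mul_min_one_exp_gaussianReal_of_pos b (neg_pos.2 ha)
    simp only [neg_mul, mul_neg, neg_sq, div_neg, integral_neg] at key ⊢
    rw [key]
    ring
  · simp [integral_mul_const, integral_id_gaussianReal]
  · rw [abs_of_pos ha]
    exact integral_mul_min_one_exp_gaussianReal_of_pos b ha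

/-- For `z ~ N(0,1)` and real constants `a ≠ 0`, `b`,
`E[z · min(1, e^{az+b})] = a e^{a²/2 + b} Φ(-b/|a| - |a|)`. -/
theorem expectation_min_exp_gaussian (a b : ℝ) (ha : a ≠ 0) :
    ∫ z, z * min 1 (Real.exp (a * z + b)) ∂(gaussianReal 0 1)
      = a * Real.exp (a ^ 2 / 2 + b) * stdNormalCDF (-b / |a| - |a|) :=
  expectation_min_exp_gaussian_general a b
end

section
/- Let w₁,…,w_N be i.i.d. standard normal random variables, λ₁,…,λ_N ≥ 0, and k a positive integer. Then E[(Σ_{i=1}^N λ_i² w_i²)^k] ≤ (2k−1)!! · (Σ_{i=1}^N λ_i²)^k. -/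
/-!
Pointwise, the weighted power-mean inequality (convexity of `t ↦ t ^ k`) gives
`(∑ λᵢ² wᵢ²) ^ k ≤ (∑ λᵢ²) ^ (k - 1) * ∑ λᵢ² wᵢ ^ (2k)`. Taking expectations, it remains to
know the even moments of a standard normal, `E[w ^ (2k)] = (2k - 1)‼`, which come from
`∫₀^∞ x ^ (2k) e^(-x²/2) dx = 2 ^ (k - 1/2) Γ(k + 1/2)` and `Γ(k + 1/2) = (2k - 1)‼ √π / 2 ^ k`.
-/

open MeasureTheory ProbabilityTheory Nat Real Set
open scoped NNReal

lemma pow_sum_mul_le_sum_pow_mul_sum_mul_pow {ι : Type*} (s : Finset ι) {w z : ι → ℝ}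
    (hw : ∀ i ∈ s, 0 ≤ w i) (hz : ∀ i ∈ s, 0 ≤ z i) (n : ℕ) :
    (∑ i ∈ s, w i * z i) ^ (n + 1) ≤ (∑ i ∈ s, w i) ^ n * ∑ i ∈ s, w i * z i ^ (n + 1) := by
  set S := ∑ i ∈ s, w i
  rcases (Finset.sum_nonneg hw).eq_or_lt with hS | hS
  · have hw0 : ∀ i ∈ s, w i = 0 := (Finset.sum_eq_zero_iff_of_nonneg hw).mp hS.symm
    have hsum (f : ι → ℝ) : ∑ i ∈ s, w i * f i = 0 :=
      Finset.sum_eq_zero fun i hi => by rw [hw0 i hi, zero_mul]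
    simp [hsum]
  · have hmean := Real.pow_arith_mean_le_arith_mean_pow s (fun i => w i / S) z
      (fun i hi => div_nonneg (hw i hi) hS.le) (by rw [← Finset.sum_div, div_self hS.ne']) hz
      (n + 1)
    simp_rw [div_mul_eq_mul_div, ← Finset.sum_div, div_pow] at hmean
    rw [div_le_div_iff₀ (by positivity) hS] at hmean
    exact le_of_mul_le_mul_right (hmean.trans_eq (by ring)) hS

lemma integral_pow_sum_mul_le {Ω ι : Type*} [MeasurableSpace Ω] {P : Measure Ω} (s : Finset ι)
    {c : ι → ℝ} {Y : ι → Ω → ℝ} (hc : ∀ i ∈ s, 0 ≤ c i) (hY : ∀ i ∈ s, ∀ ω, 0 ≤ Y i ω) (n : ℕ)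
    (hint : ∀ i ∈ s, Integrable (fun ω => Y i ω ^ (n + 1)) P) :
    ∫ ω, (∑ i ∈ s, c i * Y i ω) ^ (n + 1) ∂P
      ≤ (∑ i ∈ s, c i) ^ n * ∑ i ∈ s, c i * ∫ ω, Y i ω ^ (n + 1) ∂P := by
  have hint_sum : Integrable (fun ω => (∑ i ∈ s, c i) ^ n * ∑ i ∈ s, c i * Y i ω ^ (n + 1)) P :=
    (integrable_finsetSum s fun i hi => (hint i hi).const_mul _).const_mul _
  calc ∫ ω, (∑ i ∈ s, c i * Y i ω) ^ (n + 1) ∂P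
      ≤ ∫ ω, (∑ i ∈ s, c i) ^ n * ∑ i ∈ s, c i * Y i ω ^ (n + 1) ∂P :=
        integral_mono_of_nonneg
          (ae_of_all _ fun ω => pow_nonneg (Finset.sum_nonneg fun i hi =>
            mul_nonneg (hc i hi) (hY i hi ω)) _)
          hint_sum
          (ae_of_all _ fun ω =>
            pow_sum_mul_le_sum_pow_mul_sum_mul_pow s hc (fun i hi => hY i hi ω) n)
    _ = (∑ i ∈ s, c i) ^ n * ∑ i ∈ s, c i * ∫ ω, Y i ω ^ (n + 1) ∂P := by
        rw [integral_const_mul, integral_finsetSum s fun i hi => (hint i hi).const_mul _]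
        simp_rw [integral_const_mul]

lemma integral_even_pow_mul_exp_neg_half_sq (k : ℕ) :
    ∫ x : ℝ, x ^ (2 * k) * exp (-(1 / 2) * x ^ 2) = (2 * k - 1)‼ * √(2 * π) := by
  have hpow (t : ℝ) : t ^ (2 * k : ℝ) = t ^ (2 * k) := by exact_mod_cast rpow_natCast t (2 * k)
  calc ∫ x : ℝ, x ^ (2 * k) * exp (-(1 / 2) * x ^ 2)
      = ∫ x : ℝ, |x| ^ (2 * k : ℝ) * exp (-(1 / 2) * |x| ^ (2 : ℝ)) := by
        congr 1; ext x
        rw [hpow, rpow_two, sq_abs, (even_two_mul k).pow_abs]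
    _ = 2 * ∫ x in Ioi (0 : ℝ), x ^ (2 * k : ℝ) * exp (-(1 / 2) * x ^ (2 : ℝ)) :=
        integral_comp_abs (f := fun x => x ^ (2 * k : ℝ) * exp (-(1 / 2) * x ^ (2 : ℝ)))
    _ = 2 * ((1 / 2) ^ (-(2 * k + 1) / 2 : ℝ) * (1 / 2) * Gamma (k + 1 / 2)) := by
        rw [integral_rpow_mul_exp_neg_mul_rpow two_pos
          (by linarith [(Nat.cast_nonneg k : (0 : ℝ) ≤ k)]) one_half_pos]
        congr 3; ring
    _ = (2 * k - 1)‼ * √(2 * π) := by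
        rw [Gamma_nat_add_half, one_div, inv_rpow zero_le_two, ← rpow_neg zero_le_two, neg_div,
          neg_neg, show (2 * k + 1) / 2 = (k : ℝ) + 1 / 2 by ring, rpow_add two_pos, rpow_natCast,
          ← sqrt_eq_rpow, sqrt_mul zero_le_two]
        field_simp

namespace ProbabilityTheory

lemma integral_even_pow_gaussianReal (k : ℕ) :
    ∫ x, x ^ (2 * k) ∂gaussianReal 0 1 = (2 * k - 1)‼ := by
  have hpdf (x : ℝ) : gaussianPDFReal 0 1 x = (√(2 * π))⁻¹ * exp (-(1 / 2) * x ^ 2) := by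
    simp only [gaussianPDFReal, NNReal.coe_one, mul_one, sub_zero]
    ring_nf
  simp_rw [integral_gaussianReal_eq_integral_smul one_ne_zero, smul_eq_mul, hpdf, mul_assoc,
    integral_const_mul, mul_comm (exp _), integral_even_pow_mul_exp_neg_half_sq]
  field_simp

lemma integrable_even_pow_gaussianReal (μ : ℝ) (v : ℝ≥0) (k : ℕ) :
    Integrable (fun x => x ^ (2 * k)) (gaussianReal μ v) := by
  simpa [(even_two_mul k).pow_abs] using
    (memLp_id_gaussianReal' (μ := μ) (v := v) (2 * k : ℕ)
      (ENNReal.natCast_ne_top _)).integrable_norm_pow'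

namespace HasLaw

variable {Ω : Type*} [MeasurableSpace Ω] {P : Measure Ω} {X : Ω → ℝ}

lemma integral_even_pow_gaussianReal (hX : HasLaw X (gaussianReal 0 1) P) (k : ℕ) :
    ∫ ω, X ω ^ (2 * k) ∂P = (2 * k - 1)‼ := by
  rw [← ProbabilityTheory.integral_even_pow_gaussianReal k]
  exact hX.integral_comp (f := fun x => x ^ (2 * k)) (by fun_prop)

lemma integrable_even_pow_gaussianReal {μ : ℝ} {v : ℝ≥0}
    (hX : HasLaw X (gaussianReal μ v) P) (k : ℕ) :
    Integrable (fun ω => X ω ^ (2 * k)) P := by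
  have h := ProbabilityTheory.integrable_even_pow_gaussianReal μ v k
  rwa [← hX.map_eq, integrable_map_measure (by fun_prop) hX.aemeasurable] at h

end HasLaw

end ProbabilityTheory

theorem moment_bound_weighted_chi_sq_general (N : ℕ) (Ω : Type*) [MeasureSpace Ω]
    (w : Fin N → Ω → ℝ) (hmeas : ∀ i, Measurable (w i))
    (hdist : ∀ i, Measure.map (w i) volume = gaussianReal 0 1)
    (lam : Fin N → ℝ) (k : ℕ) (hk : 0 < k) :
    ∫ ω, (∑ i, lam i ^ 2 * w i ω ^ 2) ^ k
      ≤ ((2 * k - 1)‼ : ℝ) * (∑ i, lam i ^ 2) ^ k := by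
  obtain ⟨n, rfl⟩ : ∃ n, k = n + 1 := ⟨k - 1, by omega⟩
  have hlaw (i : Fin N) : HasLaw (w i) (gaussianReal 0 1) := ⟨(hmeas i).aemeasurable, hdist i⟩
  have hmoment (i : Fin N) : ∫ ω, (w i ω ^ 2) ^ (n + 1) = (2 * (n + 1) - 1)‼ := by
    simp_rw [← pow_mul]
    exact (hlaw i).integral_even_pow_gaussianReal (n + 1)
  calc ∫ ω, (∑ i, lam i ^ 2 * w i ω ^ 2) ^ (n + 1)
      ≤ (∑ i, lam i ^ 2) ^ n * ∑ i, lam i ^ 2 * ∫ ω, (w i ω ^ 2) ^ (n + 1) :=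
        integral_pow_sum_mul_le _ (fun i _ => sq_nonneg _) (fun i _ ω => sq_nonneg _) n
          fun i _ => by
            simpa only [← pow_mul] using (hlaw i).integrable_even_pow_gaussianReal (n + 1)
    _ = ((2 * (n + 1) - 1)‼ : ℝ) * (∑ i, lam i ^ 2) ^ (n + 1) := by
        simp_rw [hmoment, ← Finset.sum_mul]
        ring

/-- For i.i.d. standard normals `w₁,…,w_N`, nonnegative `λᵢ` and a positive
integer `k`, `E[(Σ λᵢ² wᵢ²)^k] ≤ (2k-1)!! (Σ λᵢ²)^k`. -/
theorem moment_bound_weighted_chi_sq (N : ℕ) (Ω : Type*) [MeasureSpace Ω]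
    [IsProbabilityMeasure (volume : Measure Ω)]
    (w : Fin N → Ω → ℝ) (hmeas : ∀ i, Measurable (w i))
    (hindep : iIndepFun w volume)
    (hdist : ∀ i, Measure.map (w i) volume = gaussianReal 0 1)
    (lam : Fin N → ℝ) (hlam : ∀ i, 0 ≤ lam i) (k : ℕ) (hk : 0 < k) :
    ∫ ω, (∑ i, lam i ^ 2 * w i ω ^ 2) ^ k
      ≤ ((2 * k - 1)‼ : ℝ) * (∑ i, lam i ^ 2) ^ k :=
  moment_bound_weighted_chi_sq_general N Ω w hmeas hdist lam k hk
end
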